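/- Double-layer potential solves the discrete Helmholtz equation: let z ∈ ℂ and let G : ℤ² → ℂ satisfy (Δ_d + z) G(x) = δ_{x,0} for all x ∈ ℤ². Let R be a finite region in ℤ² such that every boundary point y ∈ ∂R has exactly one interior neighbour, i.e. there is exactly one index j(y) ∈ {1,…,6} with y − e_{j(y)} ∈ R̊. For φ : ∂R → ℂ define the difference double-layer potential Wφ(x) = Σ_{y∈∂R} ( G(x−y) − G(x−y+e_{j(y)}) + δ_{x,y} ) φ(y) for x ∈ ℤ². Then (Δ_d + z) Wφ(x) = 0 for every x ∈ R̊. -/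

import Mathlib

/-- The six lattice directions `e₁, e₂, e₃ = e₁ − e₂, e₄ = −e₁, e₅ = −e₂, e₆ = −e₃`. -/
def dir : Fin 6 → ℤ × ℤ := ![(1, 0), (0, 1), (1, -1), (-1, 0), (0, -1), (-1, 1)]

/-- The neighbourhood `F_x = {x, x±e₁, x±e₂, x±(e₁−e₂)}` of a lattice point. -/
def nbhd (x : ℤ × ℤ) : Finset (ℤ × ℤ) :=
  insert x (Finset.image (fun j => x + dir j) Finset.univ)

/-- A finite region in `ℤ²`: a finite set `R` with a distinguished interior `R̊ ⊆ R`
such that `F_x ⊆ R` for every interior point `x`, and `R = ⋃_{x ∈ R̊} F_x`. -/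
structure FiniteRegion where
  carrier : Finset (ℤ × ℤ)
  interior : Finset (ℤ × ℤ)
  interior_subset : interior ⊆ carrier
  nbhd_subset : ∀ x ∈ interior, nbhd x ⊆ carrier
  cover : ∀ y ∈ carrier, ∃ x ∈ interior, y ∈ nbhd x

/-- The boundary `∂R = R \ R̊`. -/
def FiniteRegion.boundary (R : FiniteRegion) : Finset (ℤ × ℤ) :=
  R.carrier \ R.interior

/-- The `j`-th side of the boundary: `(∂R)_j = {y ∈ ∂R : y − e_j ∈ R̊}`. -/
def FiniteRegion.side (R : FiniteRegion) (j : Fin 6) : Finset (ℤ × ℤ) :=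
  R.boundary.filter (fun y => y - dir j ∈ R.interior)

/-- The discrete Laplacian of the two-dimensional triangular lattice. -/
noncomputable def discLap (u : ℤ × ℤ → ℂ) (x : ℤ × ℤ) : ℂ :=
  u (x + (1, 0)) + u (x - (1, 0)) + u (x + (0, 1)) + u (x - (0, 1)) +
    u (x + (1, -1)) + u (x - (1, -1)) - 6 * u x

lemma discLap_sum (s : Finset (ℤ×ℤ)) (f : ℤ×ℤ → ℤ×ℤ → ℂ) (x : ℤ×ℤ) :
    discLap (fun w => ∑ y ∈ s, f y w) x = ∑ y ∈ s, discLap (f y) x := by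
  simp [discLap, Finset.sum_add_distrib, Finset.sum_sub_distrib, Finset.mul_sum]

lemma discLap_mul (u : ℤ×ℤ → ℂ) (c : ℂ) (x : ℤ×ℤ) :
    discLap (fun w => u w * c) x = discLap u x * c := by
  simp only [discLap]; ring

lemma discLap_shift (u : ℤ×ℤ → ℂ) (c x : ℤ×ℤ) :
    discLap (fun w => u (w + c)) x = discLap u (x + c) := by
  simp only [discLap, add_right_comm, sub_add_eq_add_sub]

lemma discLap_delta (x y : ℤ×ℤ) (hxy : x ≠ y) :
    discLap (fun w => if w = y then (1:ℂ) else 0) x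
      = ∑ k : Fin 6, (if x + dir k = y then (1:ℂ) else 0) := by
  have r1 : x - ((1:ℤ), (0:ℤ)) = x + (-1, 0) := by apply Prod.ext <;> simp <;> omega
  have r2 : x - ((0:ℤ), (1:ℤ)) = x + (0, -1) := by apply Prod.ext <;> simp <;> omega
  have r3 : x - ((1:ℤ), (-1:ℤ)) = x + (-1, 1) := by apply Prod.ext <;> simp <;> omega
  have d0 : dir 0 = (1,0) := rfl
  have d1 : dir 1 = (0,1) := rfl
  have d2 : dir 2 = (1,-1) := rfl
  have d3 : dir 3 = (-1,0) := rfl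
  have d4 : dir 4 = (0,-1) := rfl
  have d5 : dir 5 = (-1,1) := rfl
  simp only [discLap, if_neg hxy, Fin.sum_univ_six, d0, d1, d2, d3, d4, d5, r1, r2, r3]
  ring

/-- Double-layer potential: for a region in which every boundary point `y` has a unique
interior neighbour `y − e_{j(y)}`, the potential
`Wφ(x) = Σ_{y∈∂R} (G(x−y) − G(x−y+e_{j(y)}) + δ_{x,y}) φ(y)` satisfies the discrete
Helmholtz equation at every interior point. -/
theorem double_layer_potential_helmholtz (z : ℂ) (G : ℤ × ℤ → ℂ)
    (hG : ∀ x : ℤ × ℤ, discLap G x + z * G x = (if x = (0, 0) then 1 else 0))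
    (R : FiniteRegion) (jmap : ℤ × ℤ → Fin 6)
    (hj : ∀ y ∈ R.boundary, y - dir (jmap y) ∈ R.interior ∧
      ∀ j : Fin 6, y - dir j ∈ R.interior → j = jmap y)
    (φ : ℤ × ℤ → ℂ) :
    ∀ x ∈ R.interior,
      discLap (fun w => ∑ y ∈ R.boundary,
          (G (w - y) - G (w - y + dir (jmap y)) + (if w = y then 1 else 0)) * φ y) x +
        z * (∑ y ∈ R.boundary,
          (G (x - y) - G (x - y + dir (jmap y)) + (if x = y then 1 else 0)) * φ y) = 0 := by
  classical
  intro x hx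
  rw [discLap_sum, Finset.mul_sum, ← Finset.sum_add_distrib]
  refine Finset.sum_eq_zero fun y hy => ?_
  obtain ⟨hmem, huniq⟩ := hj y hy
  have hxy : x ≠ y := fun h => (Finset.mem_sdiff.mp hy).2 (h ▸ hx)
  set j := jmap y with hjdef
  rw [discLap_mul]
  -- reduce to the kernel identity
  suffices h : discLap (fun w => G (w - y) - G (w - y + dir j) + (if w = y then 1 else 0)) x
      + z * (G (x - y) - G (x - y + dir j) + (if x = y then 1 else 0)) = 0 by
    calc discLap (fun w => G (w - y) - G (w - y + dir j) + (if w = y then 1 else 0)) x * φ y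
        + z * ((G (x - y) - G (x - y + dir j) + (if x = y then 1 else 0)) * φ y)
        = (discLap (fun w => G (w - y) - G (w - y + dir j) + (if w = y then 1 else 0)) x
            + z * (G (x - y) - G (x - y + dir j) + (if x = y then 1 else 0))) * φ y := by ring
      _ = 0 := by rw [h, zero_mul]
  -- split the kernel into three pieces
  have e1 : (fun w : ℤ×ℤ => G (w - y)) = fun w => G (w + (-y)) := by
    funext w; rw [sub_eq_add_neg]
  have e2 : (fun w : ℤ×ℤ => G (w - y + dir j)) = fun w => G (w + (dir j - y)) := by
    funext w
    congr 1
    apply Prod.ext <;> simp <;> omega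
  have hsplit : discLap (fun w => G (w - y) - G (w - y + dir j) + (if w = y then 1 else 0)) x
      = discLap (fun w => G (w + (-y))) x - discLap (fun w => G (w + (dir j - y))) x
        + discLap (fun w => if w = y then (1:ℂ) else 0) x := by
    simp only [discLap, e1, e2]
    ring
  rw [hsplit, discLap_shift, discLap_shift, discLap_delta x y hxy]
  have a1 : x + -y = x - y := by rw [sub_eq_add_neg]
  have a2 : x + (dir j - y) = x - y + dir j := by apply Prod.ext <;> simp <;> omega
  rw [a1, a2]
  have h1 := hG (x - y)
  have h2 := hG (x - y + dir j)
  have hs : (∑ k : Fin 6, (if x + dir k = y then (1:ℂ) else 0))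
      = (if x - y + dir j = (0,0) then (1:ℂ) else 0) := by
    rw [Finset.sum_eq_single_of_mem j (Finset.mem_univ j)]
    · congr 1
      have : (x + dir j = y) ↔ (x - y + dir j = (0,0)) := by
        constructor <;> intro h
        · rw [show x - y + dir j = x + dir j - y by apply Prod.ext <;> simp <;> omega, h]
          simp [show ((0:ℤ), (0:ℤ)) = 0 from rfl]
        · have : x + dir j - y = (0,0) := by
            rw [← h]; apply Prod.ext <;> simp <;> omega
          have := congrArg (· + y) this
          simpa [sub_add_cancel, show ((0:ℤ), (0:ℤ)) = 0 from rfl] using this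
      simp [this]
    · intro k _ hk
      rw [if_neg]
      intro h
      apply hk
      apply huniq
      rw [show y - dir k = x by rw [← h]; apply Prod.ext <;> simp <;> omega]
      exact hx
  rw [hs]
  have hzero : (if x - y = ((0:ℤ), (0:ℤ)) then (1:ℂ) else 0) = 0 := by
    rw [if_neg]; intro h; apply hxy; have := congrArg (· + y) h; simpa [show ((0:ℤ), (0:ℤ)) = 0 from rfl] using this
  rw [if_neg hxy]
  linear_combination h1 - h2 + hzero
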